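/- arXiv:1006.5017 — 3 statements merged into one kernel-verified Lean document; each statement's English description precedes it below -/
import Mathlib

section
/- Let M be a bicomplex Hilbert space. Then each Vₖ = eₖM (k = 1, 2) is closed in M with respect to the induced 𝕋-norm, and (Vₖ, (·,·)ₖ̂) is a complex Hilbert space over ℂ(i₁). -/
noncomputable section

/-- The bicomplex numbers 𝕋, represented in idempotent coordinates:
`(a, b)` corresponds to `a e₁ + b e₂`.  With componentwise ring operations
(the `Prod` instance) this is the commutative ring of bicomplex numbers. -/
abbrev Bicomplex : Type := ℂ × ℂ

namespace BC

/-- The imaginary unit i₁ (image of the imaginary unit of ℂ(i₁)). -/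
def i1 : Bicomplex := (Complex.I, Complex.I)

/-- The imaginary unit i₂. -/
def i2 : Bicomplex := (-Complex.I, Complex.I)

/-- The hyperbolic unit j := i₁ i₂. -/
def j : Bicomplex := i1 * i2

/-- The idempotent e₁ = (1 + j)/2. -/
def e1 : Bicomplex := (1 + j) / 2

/-- The idempotent e₂ = (1 − j)/2. -/
def e2 : Bicomplex := (1 - j) / 2

/-- The embedding of ℂ(i₁) into 𝕋. -/
def ofC (z : ℂ) : Bicomplex := (z, z)

/-- The first standard component z₁ of w = z₁ + z₂ i₂. -/
def std1 (w : Bicomplex) : ℂ := (w.1 + w.2) / 2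

/-- The second standard component z₂ of w = z₁ + z₂ i₂. -/
def std2 (w : Bicomplex) : ℂ := Complex.I * (w.1 - w.2) / 2

/-- The Euclidean ℝ⁴ norm |w| = √(|z₁|² + |z₂|²). -/
def enorm (w : Bicomplex) : ℝ :=
  Real.sqrt (‖std1 w‖ ^ 2 + ‖std2 w‖ ^ 2)

/-- w^{†₁} = z̄₁ + z̄₂ i₂. -/
def conj1 (w : Bicomplex) : Bicomplex :=
  ofC (starRingEnd ℂ (std1 w)) + ofC (starRingEnd ℂ (std2 w)) * i2

/-- w^{†₂} = z₁ − z₂ i₂. -/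
def conj2 (w : Bicomplex) : Bicomplex := ofC (std1 w) - ofC (std2 w) * i2

/-- w^{†₃} = z̄₁ − z̄₂ i₂. -/
def conj3 (w : Bicomplex) : Bicomplex :=
  ofC (starRingEnd ℂ (std1 w)) - ofC (starRingEnd ℂ (std2 w)) * i2

/-- The idempotent projection P₁. -/
def P1 (w : Bicomplex) : ℂ := w.1

/-- The idempotent projection P₂. -/
def P2 (w : Bicomplex) : ℂ := w.2

/-- The set 𝔻⁺ of positive hyperbolic numbers. -/
def Dplus : Set Bicomplex :=
  {w | ∃ x y : ℝ, 0 ≤ x ∧ 0 ≤ y ∧ w = ofC (x : ℂ) * e1 + ofC (y : ℂ) * e2}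

end BC

namespace BC

/-- V₁ = e₁ M. -/
def V1 (M : Type*) [AddCommGroup M] [Module Bicomplex M] : Set M :=
  Set.range fun m : M => e1 • m

/-- V₂ = e₂ M. -/
def V2 (M : Type*) [AddCommGroup M] [Module Bicomplex M] : Set M :=
  Set.range fun m : M => e2 • m

end BC

/-- A (hyperbolic-positive) bicomplex scalar product on a 𝕋-module M. -/
structure BCInner (M : Type*) [AddCommGroup M] [Module Bicomplex M] where
  inner : M → M → Bicomplex
  add_right : ∀ ψ φ χ : M, inner ψ (φ + χ) = inner ψ φ + inner ψ χ
  smul_right : ∀ (α : Bicomplex) (ψ φ : M), inner ψ (α • φ) = α * inner ψ φ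
  conj_symm : ∀ ψ φ : M, inner ψ φ = BC.conj3 (inner φ ψ)
  definite : ∀ ψ : M, inner ψ ψ = 0 ↔ ψ = 0
  hyperbolic_pos : ∀ ψ : M, inner ψ ψ ∈ BC.Dplus

namespace BCInner

variable {M : Type*} [AddCommGroup M] [Module Bicomplex M]

/-- The induced 𝕋-norm ‖φ‖ = (1/√2)·√((e₁φ,e₁φ)₁̂ + (e₂φ,e₂φ)₂̂). -/
def bnorm (S : BCInner M) (φ : M) : ℝ :=
  (Real.sqrt 2)⁻¹ *
    Real.sqrt ((S.inner (BC.e1 • φ) (BC.e1 • φ)).1.re +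
               (S.inner (BC.e2 • φ) (BC.e2 • φ)).2.re)

/-- Convergence of a sequence with respect to the induced 𝕋-norm. -/
def SeqLim (S : BCInner M) (f : ℕ → M) (x : M) : Prop :=
  ∀ ε : ℝ, 0 < ε → ∃ N : ℕ, ∀ n ≥ N, S.bnorm (f n - x) < ε

/-- Cauchy sequences with respect to the induced 𝕋-norm. -/
def IsCauchy (S : BCInner M) (f : ℕ → M) : Prop :=
  ∀ ε : ℝ, 0 < ε → ∃ N : ℕ, ∀ m ≥ N, ∀ n ≥ N, S.bnorm (f m - f n) < ε

/-- Completeness: M together with S is a bicomplex Hilbert space. -/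
def Complete (S : BCInner M) : Prop :=
  ∀ f : ℕ → M, S.IsCauchy f → ∃ x : M, S.SeqLim f x

/-- Convergence of the series Σ g l to x in the induced 𝕋-norm. -/
def SeriesLim (S : BCInner M) (g : ℕ → M) (x : M) : Prop :=
  S.SeqLim (fun N => ∑ l ∈ Finset.range N, g l) x

/-- A Schauder 𝕋-basis: every ψ has a unique expansion ψ = Σ wₗ mₗ. -/
def IsSchauderBasis (S : BCInner M) (m : ℕ → M) : Prop :=
  ∀ ψ : M, ∃! w : ℕ → Bicomplex, S.SeriesLim (fun l => w l • m l) ψ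

end BCInner

namespace BC
lemma e1_eq : e1 = ((1:ℂ), (0:ℂ)) := by
  simp only [e1, j, i1, i2, Prod.ext_iff, Prod.fst_mul, Prod.snd_mul, Prod.fst_add,
    Prod.snd_add, Prod.fst_div, Prod.snd_div, Prod.fst_one, Prod.snd_one,
    Prod.fst_ofNat, Prod.snd_ofNat]
  constructor <;> simp [Complex.ext_iff]
lemma e2_eq : e2 = ((0:ℂ), (1:ℂ)) := by
  simp only [e2, j, i1, i2, Prod.ext_iff, Prod.fst_mul, Prod.snd_mul, Prod.fst_sub,
    Prod.snd_sub, Prod.fst_div, Prod.snd_div, Prod.fst_one, Prod.snd_one,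
    Prod.fst_ofNat, Prod.snd_ofNat]
  constructor <;> simp [Complex.ext_iff]
lemma conj3_eq (w : Bicomplex) :
    conj3 w = (starRingEnd ℂ w.1, starRingEnd ℂ w.2) := by
  simp only [conj3, ofC, std1, std2, i2, Prod.ext_iff, Prod.fst_sub, Prod.snd_sub,
    Prod.fst_mul, Prod.snd_mul, map_div₀, map_add, map_sub, map_mul, Complex.conj_I]
  constructor <;> · simp [Complex.ext_iff]; ring_nf; simp [Complex.ext_iff]; ring_nf; try simp
end BC

namespace BC
lemma e1_mul_e1 : e1 * e1 = e1 := by rw [e1_eq]; simp [Prod.ext_iff]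
lemma e2_mul_e2 : e2 * e2 = e2 := by rw [e2_eq]; simp [Prod.ext_iff]
lemma e2_mul_e1 : e2 * e1 = 0 := by rw [e1_eq, e2_eq]; simp [Prod.ext_iff]
lemma e1_mul_e2 : e1 * e2 = 0 := by rw [e1_eq, e2_eq]; simp [Prod.ext_iff]
lemma e1_add_e2 : e1 + e2 = 1 := by rw [e1_eq, e2_eq]; simp [Prod.ext_iff]
lemma conj3_mul (a b : Bicomplex) : conj3 (a * b) = conj3 a * conj3 b := by
  simp [conj3_eq, Prod.ext_iff]
lemma conj3_e1 : conj3 e1 = e1 := by rw [e1_eq, conj3_eq]; simp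
lemma conj3_e2 : conj3 e2 = e2 := by rw [e2_eq, conj3_eq]; simp
end BC

namespace BCInner
variable {M : Type*} [AddCommGroup M] [Module Bicomplex M] (S : BCInner M)

lemma inner_smul_left (α : Bicomplex) (ψ φ : M) :
    S.inner (α • ψ) φ = BC.conj3 α * S.inner ψ φ := by
  rw [S.conj_symm, S.smul_right, BC.conj3_mul, ← S.conj_symm]

lemma inner_self_coords (ψ : M) :
    ∃ x y : ℝ, 0 ≤ x ∧ 0 ≤ y ∧ S.inner ψ ψ = ((x:ℂ), (y:ℂ)) := by
  obtain ⟨x, y, hx, hy, h⟩ := S.hyperbolic_pos ψ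
  refine ⟨x, y, hx, hy, ?_⟩
  rw [h, BC.e1_eq, BC.e2_eq]
  simp [BC.ofC, Prod.ext_iff]

lemma inner_e1_smul (ψ : M) :
    S.inner (BC.e1 • ψ) (BC.e1 • ψ) = BC.e1 * S.inner ψ ψ := by
  rw [S.smul_right, inner_smul_left, BC.conj3_e1, ← mul_assoc, BC.e1_mul_e1]

lemma inner_e2_smul (ψ : M) :
    S.inner (BC.e2 • ψ) (BC.e2 • ψ) = BC.e2 * S.inner ψ ψ := by
  rw [S.smul_right, inner_smul_left, BC.conj3_e2, ← mul_assoc, BC.e2_mul_e2]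

lemma bnorm_eq (φ : M) :
    S.bnorm φ = (Real.sqrt 2)⁻¹ *
      Real.sqrt ((S.inner φ φ).1.re + (S.inner φ φ).2.re) := by
  unfold bnorm
  rw [inner_e1_smul, inner_e2_smul, BC.e1_eq, BC.e2_eq]
  simp

lemma bnorm_nonneg (φ : M) : 0 ≤ S.bnorm φ := by
  unfold bnorm
  positivity

lemma bnorm_eq_zero {φ : M} (h : S.bnorm φ = 0) : φ = 0 := by
  obtain ⟨x, y, hx, hy, hin⟩ := S.inner_self_coords φ
  rw [bnorm_eq, hin] at h
  simp only [Complex.ofReal_re] at h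
  have h2 : (Real.sqrt 2)⁻¹ ≠ 0 := by positivity
  have := mul_eq_zero.mp h
  have hs : Real.sqrt (x + y) = 0 := by tauto
  have hxy : x + y = 0 := by
    have := Real.sqrt_eq_zero (by linarith) |>.mp hs
    linarith
  have hx0 : x = 0 := by linarith
  have hy0 : y = 0 := by linarith
  rw [← S.definite, hin, hx0, hy0]
  simp [Prod.ext_iff]

end BCInner

namespace BCInner
variable {M : Type*} [AddCommGroup M] [Module Bicomplex M] (S : BCInner M)

lemma e1_smul_of_mem {v : M} (h : v ∈ BC.V1 M) : BC.e1 • v = v := by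
  obtain ⟨m, rfl⟩ := h
  rw [smul_smul, BC.e1_mul_e1]

lemma e2_smul_of_mem {v : M} (h : v ∈ BC.V2 M) : BC.e2 • v = v := by
  obtain ⟨m, rfl⟩ := h
  rw [smul_smul, BC.e2_mul_e2]

lemma e2_smul_of_mem_V1 {v : M} (h : v ∈ BC.V1 M) : BC.e2 • v = 0 := by
  obtain ⟨m, rfl⟩ := h
  rw [smul_smul, BC.e2_mul_e1, zero_smul]

lemma e1_smul_of_mem_V2 {v : M} (h : v ∈ BC.V2 M) : BC.e1 • v = 0 := by
  obtain ⟨m, rfl⟩ := h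
  rw [smul_smul, BC.e1_mul_e2, zero_smul]

lemma sub_mem_V1 {a b : M} (ha : a ∈ BC.V1 M) (hb : b ∈ BC.V1 M) :
    a - b ∈ BC.V1 M := by
  obtain ⟨m, rfl⟩ := ha; obtain ⟨m', rfl⟩ := hb
  exact ⟨m - m', (smul_sub _ _ _)⟩

lemma sub_mem_V2 {a b : M} (ha : a ∈ BC.V2 M) (hb : b ∈ BC.V2 M) :
    a - b ∈ BC.V2 M := by
  obtain ⟨m, rfl⟩ := ha; obtain ⟨m', rfl⟩ := hb
  exact ⟨m - m', (smul_sub _ _ _)⟩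

/-- For v ∈ V₁, inner v v = (x, 0), and bnorm is (√2)⁻¹ √x. -/
lemma V1_coords {v : M} (h : v ∈ BC.V1 M) :
    ∃ x : ℝ, 0 ≤ x ∧ (S.inner v v).1.re = x ∧ (S.inner v v).2.re = 0 ∧
      S.bnorm v = (Real.sqrt 2)⁻¹ * Real.sqrt x := by
  obtain ⟨x, y, hx, hy, hin⟩ := S.inner_self_coords v
  have he : S.inner v v = BC.e1 * S.inner v v := by
    conv_lhs => rw [← e1_smul_of_mem h, inner_e1_smul]
  have hy0 : (y : ℂ) = 0 := by
    have := he
    rw [hin, BC.e1_eq] at this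
    simpa using (Prod.ext_iff.mp this).2
  rw [S.bnorm_eq, hin]
  refine ⟨x, hx, by simp, by simp [hy0], by simp [hy0]⟩

lemma V2_coords {v : M} (h : v ∈ BC.V2 M) :
    ∃ y : ℝ, 0 ≤ y ∧ (S.inner v v).2.re = y ∧ (S.inner v v).1.re = 0 ∧
      S.bnorm v = (Real.sqrt 2)⁻¹ * Real.sqrt y := by
  obtain ⟨x, y, hx, hy, hin⟩ := S.inner_self_coords v
  have he : S.inner v v = BC.e2 * S.inner v v := by
    conv_lhs => rw [← e2_smul_of_mem h, inner_e2_smul]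
  have hx0 : (x : ℂ) = 0 := by
    have := he
    rw [hin, BC.e2_eq] at this
    simpa using (Prod.ext_iff.mp this).1
  rw [S.bnorm_eq, hin]
  refine ⟨y, hy, by simp, by simp [hx0], by simp [hx0]⟩

lemma bnorm_e1_smul_le (ψ : M) : S.bnorm (BC.e1 • ψ) ≤ S.bnorm ψ := by
  obtain ⟨x, y, hx, hy, hin⟩ := S.inner_self_coords ψ
  rw [S.bnorm_eq (BC.e1 • ψ), S.bnorm_eq ψ, inner_e1_smul, hin, BC.e1_eq]
  simp only [Prod.fst_mul, Prod.snd_mul, one_mul, zero_mul, Complex.zero_re,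
    Complex.ofReal_re, add_zero]
  exact mul_le_mul_of_nonneg_left (Real.sqrt_le_sqrt (by linarith)) (by positivity)

lemma bnorm_e2_smul_le (ψ : M) : S.bnorm (BC.e2 • ψ) ≤ S.bnorm ψ := by
  obtain ⟨x, y, hx, hy, hin⟩ := S.inner_self_coords ψ
  rw [S.bnorm_eq (BC.e2 • ψ), S.bnorm_eq ψ, inner_e2_smul, hin, BC.e2_eq]
  simp only [Prod.fst_mul, Prod.snd_mul, one_mul, zero_mul, Complex.zero_re,
    Complex.ofReal_re, zero_add]
  exact mul_le_mul_of_nonneg_left (Real.sqrt_le_sqrt (by linarith)) (by positivity)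

end BCInner

namespace BCInner
variable {M : Type*} [AddCommGroup M] [Module Bicomplex M] (S : BCInner M)

lemma inner_neg_neg (ψ : M) : S.inner (-ψ) (-ψ) = S.inner ψ ψ := by
  rw [← neg_one_smul Bicomplex ψ, S.smul_right, inner_smul_left]
  have h : BC.conj3 (-1) = -1 := by rw [BC.conj3_eq]; simp [Prod.ext_iff]
  rw [h]; ring

lemma bnorm_neg (ψ : M) : S.bnorm (-ψ) = S.bnorm ψ := by
  rw [bnorm_eq, bnorm_eq, inner_neg_neg]

lemma closed_V1 (f : ℕ → M) (hf : ∀ n, f n ∈ BC.V1 M) (x : M)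
    (hlim : S.SeqLim f x) : x ∈ BC.V1 M := by
  suffices h : BC.e2 • x = 0 by
    refine ⟨x, ?_⟩
    calc BC.e1 • x = BC.e1 • x + BC.e2 • x := by rw [h, add_zero]
      _ = (BC.e1 + BC.e2) • x := (add_smul _ _ _).symm
      _ = x := by rw [BC.e1_add_e2, one_smul]
  have hb0 : S.bnorm (BC.e2 • x) = 0 := by
    by_contra hne
    have hpos : 0 < S.bnorm (BC.e2 • x) :=
      lt_of_le_of_ne (S.bnorm_nonneg _) (Ne.symm hne)
    obtain ⟨N, hN⟩ := hlim _ hpos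
    have h1 := hN N le_rfl
    have h2 : BC.e2 • (f N - x) = -(BC.e2 • x) := by
      rw [smul_sub, e2_smul_of_mem_V1 (hf N), zero_sub]
    have h3 := S.bnorm_e2_smul_le (f N - x)
    rw [h2, bnorm_neg] at h3
    linarith
  exact S.bnorm_eq_zero hb0

lemma closed_V2 (f : ℕ → M) (hf : ∀ n, f n ∈ BC.V2 M) (x : M)
    (hlim : S.SeqLim f x) : x ∈ BC.V2 M := by
  suffices h : BC.e1 • x = 0 by
    refine ⟨x, ?_⟩
    calc BC.e2 • x = BC.e1 • x + BC.e2 • x := by rw [h, zero_add]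
      _ = (BC.e1 + BC.e2) • x := (add_smul _ _ _).symm
      _ = x := by rw [BC.e1_add_e2, one_smul]
  have hb0 : S.bnorm (BC.e1 • x) = 0 := by
    by_contra hne
    have hpos : 0 < S.bnorm (BC.e1 • x) :=
      lt_of_le_of_ne (S.bnorm_nonneg _) (Ne.symm hne)
    obtain ⟨N, hN⟩ := hlim _ hpos
    have h1 := hN N le_rfl
    have h2 : BC.e1 • (f N - x) = -(BC.e1 • x) := by
      rw [smul_sub, e1_smul_of_mem_V2 (hf N), zero_sub]
    have h3 := S.bnorm_e1_smul_le (f N - x)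
    rw [h2, bnorm_neg] at h3
    linarith
  exact S.bnorm_eq_zero hb0

lemma inv_sqrt_two_le_one : (Real.sqrt 2)⁻¹ ≤ 1 := by
  have h : (1:ℝ) ≤ Real.sqrt 2 := by
    rw [show (1:ℝ) = Real.sqrt 1 from (Real.sqrt_one).symm]
    exact Real.sqrt_le_sqrt (by norm_num)
  exact inv_le_one_of_one_le₀ h

lemma sqrt_two_lt_two : Real.sqrt 2 < 2 := by
  nlinarith [Real.sq_sqrt (show (0:ℝ) ≤ 2 by norm_num), Real.sqrt_nonneg 2]

end BCInner


/-- In a bicomplex Hilbert space, each Vₖ is closed, and Vₖ with the norm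
|v|ₖ = √((v,v)ₖ̂) is a complete (Hilbert) space. -/
theorem bicomplex_Vk_closed_complete (M : Type*) [AddCommGroup M]
    [Module Bicomplex M] (S : BCInner M) (hC : S.Complete) :
    (∀ f : ℕ → M, (∀ n, f n ∈ BC.V1 M) → ∀ x : M, S.SeqLim f x → x ∈ BC.V1 M) ∧
    (∀ f : ℕ → M, (∀ n, f n ∈ BC.V2 M) → ∀ x : M, S.SeqLim f x → x ∈ BC.V2 M) ∧
    (∀ f : ℕ → M, (∀ n, f n ∈ BC.V1 M) →
      (∀ ε : ℝ, 0 < ε → ∃ N, ∀ m ≥ N, ∀ n ≥ N,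
        Real.sqrt ((S.inner (f m - f n) (f m - f n)).1.re) < ε) →
      ∃ x ∈ BC.V1 M, ∀ ε : ℝ, 0 < ε → ∃ N, ∀ n ≥ N,
        Real.sqrt ((S.inner (f n - x) (f n - x)).1.re) < ε) ∧
    (∀ f : ℕ → M, (∀ n, f n ∈ BC.V2 M) →
      (∀ ε : ℝ, 0 < ε → ∃ N, ∀ m ≥ N, ∀ n ≥ N,
        Real.sqrt ((S.inner (f m - f n) (f m - f n)).2.re) < ε) →
      ∃ x ∈ BC.V2 M, ∀ ε : ℝ, 0 < ε → ∃ N, ∀ n ≥ N,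
        Real.sqrt ((S.inner (f n - x) (f n - x)).2.re) < ε) := by
  refine ⟨S.closed_V1, S.closed_V2, ?_, ?_⟩
  · intro f hf hcau
    have hcb : S.IsCauchy f := by
      intro ε hε
      obtain ⟨N, hN⟩ := hcau ε hε
      refine ⟨N, fun m hm n hn => ?_⟩
      obtain ⟨t, ht, ht1, ht2, hb⟩ := S.V1_coords (BCInner.sub_mem_V1 (hf m) (hf n))
      have h1 := hN m hm n hn
      rw [ht1] at h1
      rw [hb]
      calc (Real.sqrt 2)⁻¹ * Real.sqrt t ≤ 1 * Real.sqrt t :=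
            mul_le_mul_of_nonneg_right BCInner.inv_sqrt_two_le_one (Real.sqrt_nonneg _)
        _ = Real.sqrt t := one_mul _
        _ < ε := h1
    obtain ⟨x, hlim⟩ := hC f hcb
    have hx1 : x ∈ BC.V1 M := S.closed_V1 f hf x hlim
    refine ⟨x, hx1, fun ε hε => ?_⟩
    obtain ⟨N, hN⟩ := hlim (ε/2) (by linarith)
    refine ⟨N, fun n hn => ?_⟩
    obtain ⟨t, ht, ht1, ht2, hb⟩ := S.V1_coords (BCInner.sub_mem_V1 (hf n) hx1)
    have h1 := hN n hn
    rw [hb] at h1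
    rw [ht1]
    have hs2pos : 0 < Real.sqrt 2 := by positivity
    calc Real.sqrt t = Real.sqrt 2 * ((Real.sqrt 2)⁻¹ * Real.sqrt t) := by
          field_simp
      _ < Real.sqrt 2 * (ε/2) := mul_lt_mul_of_pos_left h1 hs2pos
      _ < 2 * (ε/2) := mul_lt_mul_of_pos_right BCInner.sqrt_two_lt_two (by linarith)
      _ = ε := by ring
  · intro f hf hcau
    have hcb : S.IsCauchy f := by
      intro ε hε
      obtain ⟨N, hN⟩ := hcau ε hε
      refine ⟨N, fun m hm n hn => ?_⟩
      obtain ⟨t, ht, ht1, ht2, hb⟩ := S.V2_coords (BCInner.sub_mem_V2 (hf m) (hf n))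
      have h1 := hN m hm n hn
      rw [ht1] at h1
      rw [hb]
      calc (Real.sqrt 2)⁻¹ * Real.sqrt t ≤ 1 * Real.sqrt t :=
            mul_le_mul_of_nonneg_right BCInner.inv_sqrt_two_le_one (Real.sqrt_nonneg _)
        _ = Real.sqrt t := one_mul _
        _ < ε := h1
    obtain ⟨x, hlim⟩ := hC f hcb
    have hx1 : x ∈ BC.V2 M := S.closed_V2 f hf x hlim
    refine ⟨x, hx1, fun ε hε => ?_⟩
    obtain ⟨N, hN⟩ := hlim (ε/2) (by linarith)
    refine ⟨N, fun n hn => ?_⟩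
    obtain ⟨t, ht, ht1, ht2, hb⟩ := S.V2_coords (BCInner.sub_mem_V2 (hf n) hx1)
    have h1 := hN n hn
    rw [hb] at h1
    rw [ht1]
    have hs2pos : 0 < Real.sqrt 2 := by positivity
    calc Real.sqrt t = Real.sqrt 2 * ((Real.sqrt 2)⁻¹ * Real.sqrt t) := by
          field_simp
      _ < Real.sqrt 2 * (ε/2) := mul_lt_mul_of_pos_left h1 hs2pos
      _ < 2 * (ε/2) := mul_lt_mul_of_pos_right BCInner.sqrt_two_lt_two (by linarith)
      _ = ε := by ring
end
end

section
/- Orthonormalization: let M be a bicomplex Hilbert space with a Schauder 𝕋-basis {sₗ}. Then there exists an orthonormal Schauder 𝕋-basis of M, obtained as {s'ₗ⟨1⟩ + s'ₗ⟨2⟩} where {s'ₗ⟨k⟩} is the Gram–Schmidt orthonormalization of {eₖsₗ} in the Hilbert space Vₖ. -/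
noncomputable section

namespace BCAux

lemma e1_eq : BC.e1 = (1, 0) := by
  simp only [BC.e1, BC.j, BC.i1, BC.i2, Prod.ext_iff, Prod.fst_div, Prod.snd_div,
    Prod.fst_add, Prod.snd_add, Prod.fst_mul, Prod.snd_mul, Prod.fst_one, Prod.snd_one]
  constructor <;> simp [Complex.ext_iff]

lemma e2_eq : BC.e2 = (0, 1) := by
  simp only [BC.e2, BC.j, BC.i1, BC.i2, Prod.ext_iff, Prod.fst_div, Prod.snd_div,
    Prod.fst_sub, Prod.snd_sub, Prod.fst_mul, Prod.snd_mul, Prod.fst_one, Prod.snd_one]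
  constructor <;> simp [Complex.ext_iff]

lemma conj3_eq (w : Bicomplex) :
    BC.conj3 w = (starRingEnd ℂ w.1, starRingEnd ℂ w.2) := by
  simp only [BC.conj3, BC.ofC, BC.std1, BC.std2, BC.i2, Prod.ext_iff, Prod.fst_sub,
    Prod.snd_sub, Prod.fst_mul, Prod.snd_mul, map_div₀, map_add, map_mul, map_sub,
    Complex.conj_I, map_ofNat]
  constructor <;> · ring_nf; simp [Complex.I_sq]; ring

end BCAux

namespace BCAux

lemma conj3_add (v w : Bicomplex) : BC.conj3 (v + w) = BC.conj3 v + BC.conj3 w := by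
  simp [conj3_eq, Prod.ext_iff]

lemma conj3_mul (v w : Bicomplex) : BC.conj3 (v * w) = BC.conj3 v * BC.conj3 w := by
  simp [conj3_eq, Prod.ext_iff]

lemma conj3_zero : BC.conj3 0 = 0 := by simp [conj3_eq, Prod.ext_iff]

lemma conj3_one : BC.conj3 1 = 1 := by simp [conj3_eq, Prod.ext_iff]

lemma conj3_real (x y : ℝ) : BC.conj3 ((x : ℂ), (y : ℂ)) = ((x : ℂ), (y : ℂ)) := by
  simp [conj3_eq, Prod.ext_iff]

variable {M : Type*} [AddCommGroup M] [Module Bicomplex M] (S : BCInner M)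

lemma inner_zero_right (ψ : M) : S.inner ψ 0 = 0 := by
  have h := S.add_right ψ 0 0
  rw [add_zero] at h
  exact (right_eq_add.mp h).symm ▸ rfl

lemma inner_zero_left (ψ : M) : S.inner 0 ψ = 0 := by
  rw [S.conj_symm, inner_zero_right, conj3_zero]

lemma inner_add_left (φ χ ψ : M) :
    S.inner (φ + χ) ψ = S.inner φ ψ + S.inner χ ψ := by
  rw [S.conj_symm, S.add_right, conj3_add, ← S.conj_symm, ← S.conj_symm]

lemma inner_smul_left (α : Bicomplex) (φ ψ : M) :
    S.inner (α • φ) ψ = BC.conj3 α * S.inner φ ψ := by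
  rw [S.conj_symm, S.smul_right, conj3_mul, ← S.conj_symm]

lemma inner_neg_right (ψ φ : M) : S.inner ψ (-φ) = -S.inner ψ φ := by
  have : (-φ : M) = (-1 : Bicomplex) • φ := by rw [neg_one_smul]
  rw [this, S.smul_right]; ring

lemma inner_sub_right (ψ φ χ : M) :
    S.inner ψ (φ - χ) = S.inner ψ φ - S.inner ψ χ := by
  rw [sub_eq_add_neg, S.add_right, inner_neg_right]; ring

lemma inner_neg_left (ψ φ : M) : S.inner (-φ) ψ = -S.inner φ ψ := by
  have : (-φ : M) = (-1 : Bicomplex) • φ := by rw [neg_one_smul]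
  rw [this, inner_smul_left]
  have : BC.conj3 (-1) = -1 := by simp [conj3_eq, Prod.ext_iff]
  rw [this]; ring

lemma inner_sub_left (φ χ ψ : M) :
    S.inner (φ - χ) ψ = S.inner φ ψ - S.inner χ ψ := by
  rw [sub_eq_add_neg, inner_add_left, inner_neg_left]; ring

lemma inner_sum_right {ι : Type*} (ψ : M) (t : Finset ι) (f : ι → M) :
    S.inner ψ (∑ i ∈ t, f i) = ∑ i ∈ t, S.inner ψ (f i) := by
  classical
  induction t using Finset.induction_on with
  | empty => simp [inner_zero_right]
  | insert _ _ h ih => rw [Finset.sum_insert h, Finset.sum_insert h, S.add_right, ih]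

lemma inner_sum_left {ι : Type*} (ψ : M) (t : Finset ι) (f : ι → M) :
    S.inner (∑ i ∈ t, f i) ψ = ∑ i ∈ t, S.inner (f i) ψ := by
  classical
  induction t using Finset.induction_on with
  | empty => simp [inner_zero_left]
  | insert _ _ h ih => rw [Finset.sum_insert h, Finset.sum_insert h, inner_add_left, ih]

/-- The diagonal inner product is a pair of nonnegative reals. -/
lemma diag_spec (ψ : M) : ∃ x y : ℝ, 0 ≤ x ∧ 0 ≤ y ∧
    S.inner ψ ψ = ((x : ℂ), (y : ℂ)) := by
  obtain ⟨x, y, hx, hy, h⟩ := S.hyperbolic_pos ψ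
  refine ⟨x, y, hx, hy, ?_⟩
  rw [h, e1_eq, e2_eq]
  simp [BC.ofC, Prod.ext_iff]

end BCAux

namespace BCAux

variable {M : Type*} [AddCommGroup M] [Module Bicomplex M] (S : BCInner M)

/-- The real quantity `sq φ = (φ,φ)₁.re + (φ,φ)₂.re`. -/
def sq (φ : M) : ℝ := (S.inner φ φ).1.re + (S.inner φ φ).2.re

lemma inner_e1 (φ : M) :
    S.inner (BC.e1 • φ) (BC.e1 • φ) = ((S.inner φ φ).1, 0) := by
  rw [S.smul_right, inner_smul_left]
  have h1 : BC.conj3 BC.e1 = BC.e1 := by simp [conj3_eq, e1_eq, Prod.ext_iff]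
  rw [h1, e1_eq]
  simp [Prod.ext_iff]

lemma inner_e2 (φ : M) :
    S.inner (BC.e2 • φ) (BC.e2 • φ) = (0, (S.inner φ φ).2) := by
  rw [S.smul_right, inner_smul_left]
  have h1 : BC.conj3 BC.e2 = BC.e2 := by simp [conj3_eq, e2_eq, Prod.ext_iff]
  rw [h1, e2_eq]
  simp [Prod.ext_iff]

lemma bnorm_eq (φ : M) : S.bnorm φ = (Real.sqrt 2)⁻¹ * Real.sqrt (sq S φ) := by
  rw [BCInner.bnorm, inner_e1, inner_e2, sq]

lemma sq_nonneg' (φ : M) : 0 ≤ sq S φ := by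
  obtain ⟨x, y, hx, hy, h⟩ := diag_spec S φ
  rw [sq, h]
  simpa using add_nonneg hx hy

lemma sq_fst_nonneg (φ : M) : 0 ≤ (S.inner φ φ).1.re := by
  obtain ⟨x, y, hx, hy, h⟩ := diag_spec S φ
  rw [h]; simpa using hx

lemma sq_snd_nonneg (φ : M) : 0 ≤ (S.inner φ φ).2.re := by
  obtain ⟨x, y, hx, hy, h⟩ := diag_spec S φ
  rw [h]; simpa using hy

lemma bnorm_zero : S.bnorm (0 : M) = 0 := by
  rw [bnorm_eq, sq, inner_zero_right]
  simp

lemma sq_neg (φ : M) : sq S (-φ) = sq S φ := by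
  rw [sq, sq, inner_neg_left, inner_neg_right]
  simp

/-- If `bnorm φ < ε` then `sq φ < 2 ε²`. -/
lemma sq_lt_of_bnorm_lt {φ : M} {ε : ℝ} (_hε : 0 < ε) (h : S.bnorm φ < ε) :
    sq S φ < 2 * ε ^ 2 := by
  rw [bnorm_eq] at h
  have h2 : (0:ℝ) < Real.sqrt 2 := Real.sqrt_pos.mpr (by norm_num)
  have h' : Real.sqrt (sq S φ) < Real.sqrt 2 * ε := by
    rw [inv_mul_lt_iff₀ h2] at h; linarith [h]
  have := Real.sq_sqrt (sq_nonneg' S φ)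
  nlinarith [Real.sqrt_nonneg (sq S φ), Real.sq_sqrt (sq_nonneg' S φ),
    Real.sq_sqrt (le_of_lt (show (0:ℝ) < 2 by norm_num))]

/-- Pythagoras. -/
lemma sq_add_of_orth {a b : M} (h : S.inner a b = 0) :
    sq S (a + b) = sq S a + sq S b := by
  have hba : S.inner b a = 0 := by rw [S.conj_symm, h, conj3_zero]
  have : S.inner (a + b) (a + b) = S.inner a a + S.inner b b := by
    rw [S.add_right, inner_add_left, inner_add_left, h, hba]
    ring
  rw [sq, sq, sq, this]
  simp
  ring

lemma bnorm_le_of_sq_le {a b : M} (h : sq S a ≤ sq S b) : S.bnorm a ≤ S.bnorm b := by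
  rw [bnorm_eq, bnorm_eq]
  have : (0:ℝ) ≤ (Real.sqrt 2)⁻¹ := inv_nonneg.mpr (Real.sqrt_nonneg 2)
  exact mul_le_mul_of_nonneg_left (Real.sqrt_le_sqrt h) this

end BCAux

namespace BCAux

lemma cs_key (A C : ℝ) (B : ℂ) (hC : 0 ≤ C)
    (h : ∀ t : ℂ, 0 ≤ A - 2 * (t * B).re + ‖t‖ ^ 2 * C) :
    ‖B‖ ^ 2 ≤ A * C := by
  have key : ∀ r : ℝ, 0 ≤ A - 2 * (r * ‖B‖ ^ 2)
      + (r ^ 2 * ‖B‖ ^ 2) * C := by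
    intro r
    have ht := h ((r : ℂ) * starRingEnd ℂ B)
    have h1 : (((r : ℂ) * starRingEnd ℂ B) * B).re = r * ‖B‖ ^ 2 := by
      rw [mul_assoc, mul_comm (starRingEnd ℂ B) B, Complex.mul_conj]
      rw [Complex.normSq_eq_norm_sq]
      push_cast
      rw [Complex.mul_re]
      simp
      left
      rw [← Complex.ofReal_pow, Complex.ofReal_re]
    have h2 : ‖(r : ℂ) * starRingEnd ℂ B‖ ^ 2
        = r ^ 2 * ‖B‖ ^ 2 := by
      rw [norm_mul, mul_pow, Complex.norm_real, Complex.norm_conj, Real.norm_eq_abs, sq_abs]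
    rw [h1, h2] at ht
    exact ht
  have hA : 0 ≤ A := by simpa using key 0
  by_cases hB : B = 0
  · simp [hB]
    exact mul_nonneg hA hC
  · have habs : (0:ℝ) < ‖B‖ ^ 2 := pow_pos (norm_pos_iff.mpr hB) 2
    by_cases hC0 : C = 0
    · exfalso
      have ht := key ((A + 1) / (2 * ‖B‖ ^ 2))
      rw [hC0] at ht
      have : (A + 1) / (2 * ‖B‖ ^ 2) * ‖B‖ ^ 2 = (A + 1) / 2 := by
        field_simp
      rw [this] at ht
      linarith
    · have hCpos : 0 < C := lt_of_le_of_ne hC (Ne.symm hC0)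
      have ht := key C⁻¹
      have h1 : C⁻¹ * ‖B‖ ^ 2 * C = ‖B‖ ^ 2 := by
        field_simp
      have h2 : (C⁻¹) ^ 2 * ‖B‖ ^ 2 * C = ‖B‖ ^ 2 / C := by
        field_simp
      have h3 : 0 ≤ A - ‖B‖ ^ 2 / C := by nlinarith [ht]
      have h4 : ‖B‖ ^ 2 / C ≤ A := by linarith
      calc ‖B‖ ^ 2 = (‖B‖ ^ 2 / C) * C := by field_simp
        _ ≤ A * C := mul_le_mul_of_nonneg_right h4 hC

end BCAux

namespace BCAux

variable {M : Type*} [AddCommGroup M] [Module Bicomplex M] (S : BCInner M)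

lemma inner_expand_sub (α : Bicomplex) (φ χ : M) :
    S.inner (φ - α • χ) (φ - α • χ) =
      S.inner φ φ - α * S.inner φ χ - BC.conj3 α * S.inner χ φ
        + BC.conj3 α * (α * S.inner χ χ) := by
  rw [inner_sub_left, inner_sub_right, inner_sub_right, S.smul_right,
    inner_smul_left, inner_smul_left, S.smul_right]
  ring

lemma cs1 (φ χ : M) : ‖(S.inner φ χ).1‖ ^ 2
    ≤ (S.inner φ φ).1.re * (S.inner χ χ).1.re := by
  apply cs_key _ _ _ (sq_fst_nonneg S χ)
  intro t
  set α : Bicomplex := (t, 0) with hα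
  have h0 : 0 ≤ (S.inner (φ - α • χ) (φ - α • χ)).1.re := sq_fst_nonneg S _
  have h1 : (S.inner (φ - α • χ) (φ - α • χ)).1
      = (S.inner φ φ).1 - t * (S.inner φ χ).1
        - starRingEnd ℂ t * starRingEnd ℂ ((S.inner φ χ).1)
        + starRingEnd ℂ t * (t * (S.inner χ χ).1) := by
    rw [inner_expand_sub, S.conj_symm χ φ, conj3_eq, conj3_eq]
    simp [hα]
  rw [h1] at h0
  obtain ⟨a, a', ha, _, hA⟩ := diag_spec S φ
  obtain ⟨c, c', hc, _, hCe⟩ := diag_spec S χ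
  rw [hA, hCe] at h0 ⊢
  rw [Complex.sq_norm, Complex.normSq_apply]
  simp only [Complex.add_re, Complex.sub_re, Complex.mul_re, Complex.mul_im,
    Complex.conj_re, Complex.conj_im, Complex.ofReal_re, Complex.ofReal_im] at h0 ⊢
  ring_nf at h0 ⊢
  linarith

lemma cs2 (φ χ : M) : ‖(S.inner φ χ).2‖ ^ 2
    ≤ (S.inner φ φ).2.re * (S.inner χ χ).2.re := by
  apply cs_key _ _ _ (sq_snd_nonneg S χ)
  intro t
  set α : Bicomplex := (0, t) with hα
  have h0 : 0 ≤ (S.inner (φ - α • χ) (φ - α • χ)).2.re := sq_snd_nonneg S _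
  have h1 : (S.inner (φ - α • χ) (φ - α • χ)).2
      = (S.inner φ φ).2 - t * (S.inner φ χ).2
        - starRingEnd ℂ t * starRingEnd ℂ ((S.inner φ χ).2)
        + starRingEnd ℂ t * (t * (S.inner χ χ).2) := by
    rw [inner_expand_sub, S.conj_symm χ φ, conj3_eq, conj3_eq]
    simp [hα]
  rw [h1] at h0
  obtain ⟨a, a', _, ha', hA⟩ := diag_spec S φ
  obtain ⟨c, c', _, hc', hCe⟩ := diag_spec S χ
  rw [hA, hCe] at h0 ⊢
  rw [Complex.sq_norm, Complex.normSq_apply]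
  simp only [Complex.add_re, Complex.sub_re, Complex.mul_re, Complex.mul_im,
    Complex.conj_re, Complex.conj_im, Complex.ofReal_re, Complex.ofReal_im] at h0 ⊢
  ring_nf at h0 ⊢
  linarith

end BCAux

namespace BCAux

variable {M : Type*} [AddCommGroup M] [Module Bicomplex M] (S : BCInner M)

lemma indep {s : ℕ → M} (hs : S.IsSchauderBasis s) (n : ℕ) (w : ℕ → Bicomplex)
    (hsum : ∑ p ∈ Finset.range n, w p • s p = 0) : ∀ p < n, w p = 0 := by
  classical
  set w' : ℕ → Bicomplex := fun q => if q < n then w q else 0 with hw'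
  have hpart : ∀ k, n ≤ k → ∑ l ∈ Finset.range k, w' l • s l = 0 := by
    intro k hk
    have h1 : ∑ l ∈ Finset.range n, w' l • s l = ∑ l ∈ Finset.range k, w' l • s l := by
      apply Finset.sum_subset (Finset.range_subset_range.mpr hk)
      intro x _ hnx
      have : ¬ x < n := fun h => hnx (Finset.mem_range.mpr h)
      simp [hw', this]
    have h2 : ∑ l ∈ Finset.range n, w' l • s l = ∑ l ∈ Finset.range n, w l • s l := by
      apply Finset.sum_congr rfl
      intro x hx
      simp [hw', Finset.mem_range.mp hx]
    rw [← h1, h2, hsum]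
  have h1 : S.SeriesLim (fun l => w' l • s l) 0 := by
    intro ε hε
    exact ⟨n, fun k hk => by
      show S.bnorm _ < ε
      simp only []
      rw [hpart k hk, sub_zero, bnorm_zero]
      exact hε⟩
  have h2 : S.SeriesLim (fun l => (fun _ => (0:Bicomplex)) l • s l) 0 := by
    intro ε hε
    exact ⟨0, fun k _ => by
      show S.bnorm _ < ε
      simp [bnorm_zero]; exact hε⟩
  have := ExistsUnique.unique (hs 0) h1 h2
  intro p hp
  have := congrFun this p
  simpa [hw', hp] using this

end BCAux

namespace BCAux

/-- The componentwise normalization factor. -/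
noncomputable def normFactor {M : Type*} [AddCommGroup M] [Module Bicomplex M]
    (S : BCInner M) (u : M) : Bicomplex :=
  (((Real.sqrt ((S.inner u u).1.re))⁻¹ : ℝ), ((Real.sqrt ((S.inner u u).2.re))⁻¹ : ℝ))

/-- The inverse normalization factor. -/
noncomputable def normFactorInv {M : Type*} [AddCommGroup M] [Module Bicomplex M]
    (S : BCInner M) (u : M) : Bicomplex :=
  ((Real.sqrt ((S.inner u u).1.re) : ℝ), (Real.sqrt ((S.inner u u).2.re) : ℝ))

/-- Gram–Schmidt: the orthonormalized sequence. -/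
noncomputable def gsM {M : Type*} [AddCommGroup M] [Module Bicomplex M]
    (S : BCInner M) (s : ℕ → M) (l : ℕ) : M :=
  let u := s l - ∑ p ∈ (Finset.range l).attach,
      S.inner (gsM S s p.1) (s l) • gsM S s p.1
  normFactor S u • u
termination_by l
decreasing_by exact Finset.mem_range.mp p.2

/-- The unnormalized Gram–Schmidt vectors. -/
noncomputable def gsU {M : Type*} [AddCommGroup M] [Module Bicomplex M]
    (S : BCInner M) (s : ℕ → M) (l : ℕ) : M :=
  s l - ∑ p ∈ Finset.range l, S.inner (gsM S s p) (s l) • gsM S s p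

lemma gsM_eq {M : Type*} [AddCommGroup M] [Module Bicomplex M]
    (S : BCInner M) (s : ℕ → M) (l : ℕ) :
    gsM S s l = normFactor S (gsU S s l) • gsU S s l := by
  rw [gsM, gsU]
  congr 1 <;> rw [← Finset.sum_attach (Finset.range l) (fun p => S.inner (gsM S s p) (s l) • gsM S s p)]

end BCAux

namespace BCAux

variable {M : Type*} [AddCommGroup M] [Module Bicomplex M] (S : BCInner M)

lemma spanS_mono (s : ℕ → M) {a b : ℕ} (h : a ≤ b) :
    Submodule.span Bicomplex (Set.range (fun q : Fin a => s q)) ≤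
    Submodule.span Bicomplex (Set.range (fun q : Fin b => s q)) := by
  apply Submodule.span_mono
  rintro x ⟨q, rfl⟩
  exact ⟨⟨q.1, lt_of_lt_of_le q.2 h⟩, rfl⟩

lemma e1_ne_zero : BC.e1 ≠ 0 := by
  rw [e1_eq]; simp [Prod.ext_iff]

lemma e2_ne_zero : BC.e2 ≠ 0 := by
  rw [e2_eq]; simp [Prod.ext_iff]

lemma gs_main {s : ℕ → M} (hs : S.IsSchauderBasis s) : ∀ l : ℕ,
    (0 < (S.inner (gsU S s l) (gsU S s l)).1.re ∧
     0 < (S.inner (gsU S s l) (gsU S s l)).2.re) ∧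
    (∀ p, p < l → S.inner (gsM S s p) (gsM S s l) = 0) ∧
    S.inner (gsM S s l) (gsM S s l) = 1 ∧
    gsM S s l ∈ Submodule.span Bicomplex (Set.range (fun q : Fin (l+1) => s q)) := by
  intro l
  induction l using Nat.strong_induction_on with
  | _ l IH =>
  classical
  -- previous vectors are orthonormal
  have horth : ∀ p q, p < l → q < l →
      S.inner (gsM S s p) (gsM S s q) = if p = q then 1 else 0 := by
    intro p q hp hq
    rcases lt_trichotomy p q with h | h | h
    · rw [if_neg (Nat.ne_of_lt h)]
      exact (IH q hq).2.1 p h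
    · subst h
      rw [if_pos rfl]
      exact (IH p hp).2.2.1
    · rw [if_neg (Nat.ne_of_gt h)]
      rw [S.conj_symm, (IH p hp).2.1 q h, conj3_zero]
  -- span property of previous vectors
  have hspanp : ∀ p, p < l → gsM S s p ∈
      Submodule.span Bicomplex (Set.range (fun q : Fin l => s q)) := by
    intro p hp
    exact spanS_mono s (Nat.succ_le_of_lt hp) ((IH p hp).2.2.2)
  -- s l - gsU l lies in the span of earlier s's
  have huspan : s l - gsU S s l ∈
      Submodule.span Bicomplex (Set.range (fun q : Fin l => s q)) := by
    rw [gsU]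
    have : s l - (s l - ∑ p ∈ Finset.range l, S.inner (gsM S s p) (s l) • gsM S s p)
        = ∑ p ∈ Finset.range l, S.inner (gsM S s p) (s l) • gsM S s p := by abel
    rw [this]
    apply Submodule.sum_mem
    intro p hp
    exact Submodule.smul_mem _ _ (hspanp p (Finset.mem_range.mp hp))
  -- nondegeneracy
  obtain ⟨x, y, hx0, hy0, hdiag⟩ := diag_spec S (gsU S s l)
  have hre1 : (S.inner (gsU S s l) (gsU S s l)).1.re = x := by rw [hdiag]; simp
  have hre2 : (S.inner (gsU S s l) (gsU S s l)).2.re = y := by rw [hdiag]; simp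
  have hcontra : ∀ (e : Bicomplex), e ≠ 0 → e • gsU S s l = 0 → False := by
    intro e he hzero
    have h1 : e • s l ∈ Submodule.span Bicomplex (Set.range (fun q : Fin l => s q)) := by
      have : e • s l = e • (s l - gsU S s l) := by
        rw [smul_sub, hzero, sub_zero]
      rw [this]
      exact Submodule.smul_mem _ _ huspan
    obtain ⟨c, hc⟩ := (Submodule.mem_span_range_iff_exists_fun (R := Bicomplex)).mp h1
    set w : ℕ → Bicomplex := fun q =>
      if h : q < l then -c ⟨q, h⟩ else if q = l then e else 0 with hw
    have hsum : ∑ p ∈ Finset.range (l+1), w p • s p = 0 := by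
      rw [Finset.sum_range_succ]
      have hwl : w l = e := by simp [hw]
      have hrest : ∑ p ∈ Finset.range l, w p • s p = -(e • s l) := by
        rw [← hc, ← Finset.sum_neg_distrib]
        rw [← Fin.sum_univ_eq_sum_range (fun p => w p • s p) l]
        apply Finset.sum_congr rfl
        intro i _
        simp [hw, i.2, neg_smul]
      rw [hwl, hrest]
      abel
    have := indep S hs (l+1) w hsum l (Nat.lt_succ_self l)
    rw [hw] at this
    simp at this
    exact he this
  have hxpos : 0 < x := by
    rcases lt_or_eq_of_le hx0 with h | h
    · exact h
    · exfalso
      apply hcontra BC.e1 e1_ne_zero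
      apply (S.definite _).mp
      rw [inner_e1, hdiag, ← h]
      simp [Prod.ext_iff]
  have hypos : 0 < y := by
    rcases lt_or_eq_of_le hy0 with h | h
    · exact h
    · exfalso
      apply hcontra BC.e2 e2_ne_zero
      apply (S.definite _).mp
      rw [inner_e2, hdiag, ← h]
      simp [Prod.ext_iff]
  -- orthogonality of gsU l to previous gsM's
  have hup : ∀ p, p < l → S.inner (gsM S s p) (gsU S s l) = 0 := by
    intro p hp
    rw [gsU, inner_sub_right, inner_sum_right]
    have : ∀ q ∈ Finset.range l,
        S.inner (gsM S s p) (S.inner (gsM S s q) (s l) • gsM S s q)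
          = S.inner (gsM S s q) (s l) * (if p = q then 1 else 0) := by
      intro q hq
      rw [S.smul_right, horth p q hp (Finset.mem_range.mp hq)]
    rw [Finset.sum_congr rfl this, Finset.sum_eq_single p]
    · simp
    · intro q _ hq
      rw [if_neg (fun h => hq h.symm), mul_zero]
    · intro h
      exact absurd (Finset.mem_range.mpr hp) h
  -- orthogonality of gsM l to previous gsM's
  have hmp : ∀ p, p < l → S.inner (gsM S s p) (gsM S s l) = 0 := by
    intro p hp
    rw [gsM_eq S s l, S.smul_right, hup p hp, mul_zero]
  -- normalization
  have hnf : S.inner (gsM S s l) (gsM S s l) = 1 := by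
    rw [gsM_eq S s l, S.smul_right, inner_smul_left]
    rw [normFactor, hre1, hre2, hdiag]
    rw [conj3_eq]
    have h1 : Real.sqrt x ≠ 0 := ne_of_gt (Real.sqrt_pos.mpr hxpos)
    have h2 : Real.sqrt y ≠ 0 := ne_of_gt (Real.sqrt_pos.mpr hypos)
    have e1 : (((Real.sqrt x)⁻¹ : ℝ) : ℂ) * ((((Real.sqrt x)⁻¹ : ℝ) : ℂ) * (x : ℂ)) = 1 := by
      push_cast
      rw [show ((Real.sqrt x : ℝ) : ℂ)⁻¹ * (((Real.sqrt x : ℝ) : ℂ)⁻¹ * (x:ℂ))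
        = ((x:ℂ) / (((Real.sqrt x : ℝ):ℂ) * ((Real.sqrt x : ℝ):ℂ))) by ring]
      rw [← Complex.ofReal_mul, Real.mul_self_sqrt (le_of_lt hxpos)]
      rw [div_self (by exact_mod_cast ne_of_gt hxpos)]
    have e2 : (((Real.sqrt y)⁻¹ : ℝ) : ℂ) * ((((Real.sqrt y)⁻¹ : ℝ) : ℂ) * (y : ℂ)) = 1 := by
      push_cast
      rw [show ((Real.sqrt y : ℝ) : ℂ)⁻¹ * (((Real.sqrt y : ℝ) : ℂ)⁻¹ * (y:ℂ))
        = ((y:ℂ) / (((Real.sqrt y : ℝ):ℂ) * ((Real.sqrt y : ℝ):ℂ))) by ring]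
      rw [← Complex.ofReal_mul, Real.mul_self_sqrt (le_of_lt hypos)]
      rw [div_self (by exact_mod_cast ne_of_gt hypos)]
    simp [Prod.ext_iff]
    constructor
    · simpa using e1
    · simpa using e2
  -- span
  have hspan : gsM S s l ∈
      Submodule.span Bicomplex (Set.range (fun q : Fin (l+1) => s q)) := by
    rw [gsM_eq S s l]
    apply Submodule.smul_mem
    have h1 : gsU S s l = s l - (s l - gsU S s l) := by abel
    rw [h1]
    apply Submodule.sub_mem
    · exact Submodule.subset_span ⟨⟨l, Nat.lt_succ_self l⟩, rfl⟩
    · exact spanS_mono s (Nat.le_succ l) huspan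
  exact ⟨⟨by rw [hre1]; exact hxpos, by rw [hre2]; exact hypos⟩, hmp, hnf, hspan⟩

end BCAux

namespace BCAux

variable {M : Type*} [AddCommGroup M] [Module Bicomplex M] (S : BCInner M)

lemma nfInv_smul {s : ℕ → M} (hs : S.IsSchauderBasis s) (l : ℕ) :
    normFactorInv S (gsU S s l) • gsM S s l = gsU S s l := by
  obtain ⟨⟨hx, hy⟩, -, -, -⟩ := gs_main S hs l
  rw [gsM_eq S s l, smul_smul]
  have : normFactorInv S (gsU S s l) * normFactor S (gsU S s l) = 1 := by
    rw [normFactorInv, normFactor]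
    have h1 : Real.sqrt ((S.inner (gsU S s l) (gsU S s l)).1.re) ≠ 0 :=
      ne_of_gt (Real.sqrt_pos.mpr hx)
    have h2 : Real.sqrt ((S.inner (gsU S s l) (gsU S s l)).2.re) ≠ 0 :=
      ne_of_gt (Real.sqrt_pos.mpr hy)
    simp [Prod.ext_iff]
    constructor
    · rw [← Complex.ofReal_inv, ← Complex.ofReal_mul, mul_inv_cancel₀ h1]
      simp
    · rw [← Complex.ofReal_inv, ← Complex.ofReal_mul, mul_inv_cancel₀ h2]
      simp
  rw [this, one_smul]

lemma s_mem_span_gsM {s : ℕ → M} (hs : S.IsSchauderBasis s) (l : ℕ) :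
    s l ∈ Submodule.span Bicomplex (Set.range (fun q : Fin (l+1) => gsM S s q)) := by
  have h1 : s l = gsU S s l
      + ∑ p ∈ Finset.range l, S.inner (gsM S s p) (s l) • gsM S s p := by
    rw [gsU]; abel
  rw [h1, ← nfInv_smul S hs l]
  apply Submodule.add_mem
  · exact Submodule.smul_mem _ _ (Submodule.subset_span ⟨⟨l, Nat.lt_succ_self l⟩, rfl⟩)
  · apply Submodule.sum_mem
    intro p hp
    apply Submodule.smul_mem
    exact Submodule.subset_span ⟨⟨p, Nat.lt_succ_of_lt (Finset.mem_range.mp hp)⟩, rfl⟩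

lemma le_zero_of_forall_lt {a : ℝ} (h : ∀ ε : ℝ, 0 < ε → a < 2 * ε ^ 2) : a ≤ 0 := by
  by_contra h'
  push_neg at h'
  have hε : 0 < Real.sqrt (a / 2) := Real.sqrt_pos.mpr (by linarith)
  have := h _ hε
  rw [Real.sq_sqrt (by linarith)] at this
  linarith

end BCAux

namespace BCAux

variable {M : Type*} [AddCommGroup M] [Module Bicomplex M] (S : BCInner M)

lemma gs_orth {s : ℕ → M} (hs : S.IsSchauderBasis s) (l p : ℕ) :
    S.inner (gsM S s l) (gsM S s p) = if l = p then 1 else 0 := by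
  rcases lt_trichotomy l p with h | h | h
  · rw [if_neg (Nat.ne_of_lt h)]
    exact (gs_main S hs p).2.1 l h
  · subst h
    rw [if_pos rfl]
    exact (gs_main S hs l).2.2.1
  · rw [if_neg (Nat.ne_of_gt h), S.conj_symm, (gs_main S hs l).2.1 p h, conj3_zero]

lemma inner_partial {s : ℕ → M} (hs : S.IsSchauderBasis s) (v : ℕ → Bicomplex)
    {n q : ℕ} (hq : q < n) :
    S.inner (gsM S s q) (∑ l ∈ Finset.range n, v l • gsM S s l) = v q := by
  rw [inner_sum_right]
  have heach : ∀ l ∈ Finset.range n,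
      S.inner (gsM S s q) (v l • gsM S s l) = v l * (if q = l then 1 else 0) := by
    intro l _
    rw [S.smul_right, gs_orth S hs q l]
  rw [Finset.sum_congr rfl heach, Finset.sum_eq_single q]
  · simp
  · intro b _ hb
    rw [if_neg (fun hh => hb hh.symm), mul_zero]
  · intro hq'
    exact absurd (Finset.mem_range.mpr hq) hq'

lemma perp_of_mem_span {s : ℕ → M} (hs : S.IsSchauderBasis s) (ψ : M) (n : ℕ) :
    ∀ v ∈ Submodule.span Bicomplex (Set.range (fun q : Fin n => gsM S s q)),
      S.inner v (ψ - ∑ l ∈ Finset.range n, (S.inner (gsM S s l) ψ) • gsM S s l) = 0 := by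
  intro v hv
  induction hv using Submodule.span_induction with
  | mem x hx =>
    obtain ⟨⟨q, hq⟩, rfl⟩ := hx
    rw [inner_sub_right, inner_partial S hs _ hq, sub_self]
  | zero => rw [inner_zero_left]
  | add x y hx hy ihx ihy => rw [inner_add_left, ihx, ihy, add_zero]
  | smul a x hx ihx => rw [inner_smul_left, ihx, mul_zero]

lemma approx_le {s : ℕ → M} (hs : S.IsSchauderBasis s) (ψ : M)
    (w : ℕ → Bicomplex) (n : ℕ) :
    sq S (∑ l ∈ Finset.range n, (S.inner (gsM S s l) ψ) • gsM S s l - ψ)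
      ≤ sq S (∑ l ∈ Finset.range n, w l • s l - ψ) := by
  set P : M := ∑ l ∈ Finset.range n, (S.inner (gsM S s l) ψ) • gsM S s l with hP
  set Q : M := ∑ l ∈ Finset.range n, w l • s l with hQ
  have hPT : P ∈ Submodule.span Bicomplex (Set.range (fun q : Fin n => gsM S s q)) := by
    apply Submodule.sum_mem
    intro p hp
    exact Submodule.smul_mem _ _
      (Submodule.subset_span ⟨⟨p, Finset.mem_range.mp hp⟩, rfl⟩)
  have hQT : Q ∈ Submodule.span Bicomplex (Set.range (fun q : Fin n => gsM S s q)) := by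
    apply Submodule.sum_mem
    intro p hp
    exact Submodule.smul_mem _ _
      (spanS_mono (gsM S s) (Nat.succ_le_of_lt (Finset.mem_range.mp hp))
        (s_mem_span_gsM S hs p))
  have hab : S.inner (P - Q) (ψ - P) = 0 :=
    perp_of_mem_span S hs ψ n _ (Submodule.sub_mem _ hPT hQT)
  have hsum : (P - Q) + (ψ - P) = ψ - Q := by abel
  have hpyth := sq_add_of_orth S hab
  rw [hsum] at hpyth
  have h1 : sq S (P - ψ) = sq S (ψ - P) := by
    rw [show (P - ψ : M) = -(ψ - P) by abel, sq_neg]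
  have h2 : sq S (Q - ψ) = sq S (ψ - Q) := by
    rw [show (Q - ψ : M) = -(ψ - Q) by abel, sq_neg]
  rw [h1, h2, hpyth]
  have := sq_nonneg' S (P - Q)
  linarith

lemma coeff_unique {s : ℕ → M} (hs : S.IsSchauderBasis s) (ψ : M)
    (w' : ℕ → Bicomplex)
    (hw' : S.SeriesLim (fun l => w' l • gsM S s l) ψ) (p : ℕ) :
    w' p = S.inner (gsM S s p) ψ := by
  set d : Bicomplex := w' p - S.inner (gsM S s p) ψ with hd
  have hmm : S.inner (gsM S s p) (gsM S s p) = 1 := (gs_main S hs p).2.2.1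
  have habs : ∀ ε : ℝ, 0 < ε →
      ‖d.1‖ ^ 2 < 2 * ε ^ 2 ∧ ‖d.2‖ ^ 2 < 2 * ε ^ 2 := by
    intro ε hε
    obtain ⟨N, hN⟩ := hw' ε hε
    set n := max N (p + 1) with hn
    have hNn : n ≥ N := le_max_left _ _
    have hpn : p < n := lt_of_lt_of_le (Nat.lt_succ_self p) (le_max_right _ _)
    have hb := hN n hNn
    simp only [] at hb
    set χ : M := ∑ l ∈ Finset.range n, w' l • gsM S s l - ψ with hχ
    have hdeq : d = S.inner (gsM S s p) χ := by
      rw [hχ, inner_sub_right, inner_partial S hs _ hpn, hd]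
    have hsq : sq S χ < 2 * ε ^ 2 := sq_lt_of_bnorm_lt S hε hb
    have hsq1 : (S.inner χ χ).1.re < 2 * ε ^ 2 := by
      have := sq_snd_nonneg S χ
      rw [sq] at hsq
      linarith
    have hsq2 : (S.inner χ χ).2.re < 2 * ε ^ 2 := by
      have := sq_fst_nonneg S χ
      rw [sq] at hsq
      linarith
    constructor
    · have h1 := cs1 S (gsM S s p) χ
      rw [hmm] at h1
      have hone : ((1 : Bicomplex).1).re = 1 := by norm_num [Prod.fst_one]
      rw [hone, one_mul] at h1
      rw [hdeq]
      exact lt_of_le_of_lt h1 hsq1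
    · have h2 := cs2 S (gsM S s p) χ
      rw [hmm] at h2
      have hone : ((1 : Bicomplex).2).re = 1 := by norm_num [Prod.snd_one]
      rw [hone, one_mul] at h2
      rw [hdeq]
      exact lt_of_le_of_lt h2 hsq2
  have h1 : ‖d.1‖ ^ 2 ≤ 0 :=
    le_zero_of_forall_lt (fun ε hε => (habs ε hε).1)
  have h2 : ‖d.2‖ ^ 2 ≤ 0 :=
    le_zero_of_forall_lt (fun ε hε => (habs ε hε).2)
  have hd1 : d.1 = 0 := by
    have h0 : ‖d.1‖ = 0 := by nlinarith [norm_nonneg d.1]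
    exact norm_eq_zero.mp h0
  have hd2 : d.2 = 0 := by
    have h0 : ‖d.2‖ = 0 := by nlinarith [norm_nonneg d.2]
    exact norm_eq_zero.mp h0
  have : d = 0 := Prod.ext hd1 hd2
  rw [hd] at this
  exact sub_eq_zero.mp this

end BCAux

/-- Orthonormalization: a bicomplex Hilbert space with a Schauder 𝕋-basis
admits an orthonormal Schauder 𝕋-basis. -/
theorem bicomplex_orthonormalization (M : Type*) [AddCommGroup M]
    [Module Bicomplex M] (S : BCInner M) (hC : S.Complete)
    (s : ℕ → M) (hs : S.IsSchauderBasis s) :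
    ∃ m : ℕ → M, S.IsSchauderBasis m ∧
      ∀ l p, S.inner (m l) (m p) = if l = p then 1 else 0 := by
  refine ⟨BCAux.gsM S s, ?_, fun l p => BCAux.gs_orth S hs l p⟩
  intro ψ
  refine ⟨fun l => S.inner (BCAux.gsM S s l) ψ, ?_,
    fun w' hw' => funext fun p => BCAux.coeff_unique S hs ψ w' hw' p⟩
  obtain ⟨w, hw, -⟩ := hs ψ
  intro ε hε
  obtain ⟨N, hN⟩ := hw ε hε
  refine ⟨N, fun n hn => ?_⟩
  have h1 := hN n hn
  simp only [] at h1 ⊢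
  calc S.bnorm (∑ l ∈ Finset.range n, (S.inner (BCAux.gsM S s l) ψ) • BCAux.gsM S s l - ψ)
      ≤ S.bnorm (∑ l ∈ Finset.range n, w l • s l - ψ) :=
        BCAux.bnorm_le_of_sq_le S (BCAux.approx_le S hs ψ w n)
    _ < ε := h1
end
end

section
/- Let m₁ be an element of a bicomplex Hilbert space M and write (m₁, m₁) = a₁̂ e₁ + a₂̂ e₂ with a₁̂, a₂̂ ∈ ℝ. Then there exists an invertible bicomplex number w such that (w m₁, w m₁) = 1 if and only if a₁̂ > 0 and a₂̂ > 0. -/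
noncomputable section

lemma BC.conj3_eq_s19 (w : Bicomplex) :
    BC.conj3 w = (starRingEnd ℂ w.1, starRingEnd ℂ w.2) := by
  unfold BC.conj3 BC.ofC BC.std1 BC.std2 BC.i2
  ext
  · simp only [Prod.fst_sub, Prod.fst_mul, Prod.snd_sub, Prod.snd_mul,
      map_div₀, map_add, map_mul, map_sub, Complex.conj_I, map_ofNat]
    have hI := Complex.I_mul_I
    ring_nf
    rw [Complex.I_sq]
    ring
  · simp only [Prod.fst_sub, Prod.fst_mul, Prod.snd_sub, Prod.snd_mul,
      map_div₀, map_add, map_mul, map_sub, Complex.conj_I, map_ofNat]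
    ring_nf
    rw [Complex.I_sq]
    ring

lemma BCInner.inner_smul_smul {M : Type*} [AddCommGroup M] [Module Bicomplex M]
    (S : BCInner M) (w : Bicomplex) (ψ : M) :
    S.inner (w • ψ) (w • ψ) = BC.conj3 w * w * S.inner ψ ψ := by
  rw [S.smul_right, S.conj_symm (w • ψ) ψ, S.smul_right]
  have h3 : BC.conj3 (w * S.inner ψ ψ) = BC.conj3 w * BC.conj3 (S.inner ψ ψ) := by
    simp [BC.conj3_eq_s19, Prod.mul_def]
  rw [h3, ← S.conj_symm ψ ψ]
  ring

/-- A ket m₁ with (m₁, m₁) = a₁̂ e₁ + a₂̂ e₂ can be normalized by an invertible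
bicomplex scalar iff a₁̂ > 0 and a₂̂ > 0. -/
theorem bicomplex_normalizable_iff (M : Type*) [AddCommGroup M]
    [Module Bicomplex M] (S : BCInner M) (hC : S.Complete)
    (m₁ : M) (a₁ a₂ : ℝ)
    (h : S.inner m₁ m₁ = BC.ofC (a₁ : ℂ) * BC.e1 + BC.ofC (a₂ : ℂ) * BC.e2) :
    (∃ w : Bicomplex, IsUnit w ∧ S.inner (w • m₁) (w • m₁) = 1) ↔
    (0 < a₁ ∧ 0 < a₂) := by
  have hmm : S.inner m₁ m₁ = ((a₁ : ℂ), (a₂ : ℂ)) := by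
    rw [h]
    unfold BC.ofC BC.e1 BC.e2 BC.j BC.i1 BC.i2
    ext <;> simp [Prod.mul_def, Complex.ext_iff] <;> ring_nf <;>
      simp [Complex.I_sq, Complex.ext_iff] <;> ring
  constructor
  · rintro ⟨w, hw, heq⟩
    rw [S.inner_smul_smul, hmm, BC.conj3_eq_s19] at heq
    have h1 : starRingEnd ℂ w.1 * w.1 * (a₁ : ℂ) = 1 := congrArg Prod.fst heq
    have h2 : starRingEnd ℂ w.2 * w.2 * (a₂ : ℂ) = 1 := congrArg Prod.snd heq
    rw [mul_comm (starRingEnd ℂ w.1), Complex.mul_conj] at h1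
    rw [mul_comm (starRingEnd ℂ w.2), Complex.mul_conj] at h2
    have h1' : Complex.normSq w.1 * a₁ = 1 := by
      exact_mod_cast h1
    have h2' : Complex.normSq w.2 * a₂ = 1 := by
      exact_mod_cast h2
    have n1 := Complex.normSq_nonneg w.1
    have n2 := Complex.normSq_nonneg w.2
    constructor <;> nlinarith
  · rintro ⟨h1, h2⟩
    refine ⟨(((Real.sqrt a₁)⁻¹ : ℝ), ((Real.sqrt a₂)⁻¹ : ℝ)), ?_, ?_⟩
    · rw [isUnit_iff_exists_inv]
      refine ⟨(((Real.sqrt a₁ : ℝ) : ℂ), ((Real.sqrt a₂ : ℝ) : ℂ)), ?_⟩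
      have s1 : Real.sqrt a₁ ≠ 0 := by positivity
      have s2 : Real.sqrt a₂ ≠ 0 := by positivity
      ext <;> simp [Prod.mul_def] <;>
        [exact inv_mul_cancel₀ (by exact_mod_cast s1);
         exact inv_mul_cancel₀ (by exact_mod_cast s2)]
    · rw [S.inner_smul_smul, hmm, BC.conj3_eq_s19]
      have e1 : ((Real.sqrt a₁)⁻¹ : ℝ) * (Real.sqrt a₁)⁻¹ * a₁ = 1 := by
        rw [← mul_inv, Real.mul_self_sqrt h1.le]
        exact inv_mul_cancel₀ h1.ne'
      have e2 : ((Real.sqrt a₂)⁻¹ : ℝ) * (Real.sqrt a₂)⁻¹ * a₂ = 1 := by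
        rw [← mul_inv, Real.mul_self_sqrt h2.le]
        exact inv_mul_cancel₀ h2.ne'
      ext
      · simpa using congrArg (fun x : ℝ => (x : ℂ)) e1
      · simpa using congrArg (fun x : ℝ => (x : ℂ)) e2
end
end
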